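/- Fix a notation β and a non-decreasing function ξ^{β+1} majorizing the settling-time function for 0^(β+1). If T is a tree computable from 0^β that is uniquely (β+1)-small, and ζ, g are two distinct paths through T with ζ↾(x+1) ≠ g↾(x+1), then for every x, max(ζ(x), g(x)) ≥ ξ^{β+1}(x); consequently any non-decreasing h majorizing both ζ and g computes 0^(β+1) from 0^β. -/

import Mathlib

attribute [local instance] Classical.propDecidable

/-- Codes for oracle (Turing) machines: partial recursive operations relative to an oracle. -/
inductive OCode : Type
  | zero | succ | left | right | oracle
  | pair : OCode → OCode → OCode
  | comp : OCode → OCode → OCode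
  | prec : OCode → OCode → OCode
  | rfind' : OCode → OCode

/-- Evaluation of an oracle machine with (partial) oracle `g`. -/
def OCode.eval (g : ℕ →. ℕ) : OCode → ℕ →. ℕ
  | .zero => fun _ => Part.some 0
  | .succ => fun n => Part.some (n + 1)
  | .left => fun n => Part.some n.unpair.1
  | .right => fun n => Part.some n.unpair.2
  | .oracle => g
  | .pair cf cg => fun n => Nat.pair <$> OCode.eval g cf n <*> OCode.eval g cg n
  | .comp cf cg => fun n => OCode.eval g cg n >>= OCode.eval g cf
  | .prec cf cg => fun n =>
      n.unpair.2.rec (OCode.eval g cf n.unpair.1) fun y IH =>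
        IH >>= fun i => OCode.eval g cg (Nat.pair n.unpair.1 (Nat.pair y i))
  | .rfind' cf => fun n =>
      (Nat.rfind fun m => (fun x => x = 0) <$>
        OCode.eval g cf (Nat.pair n.unpair.1 (m + n.unpair.2))).map (· + n.unpair.2)

/-- An effective coding of oracle machine codes by natural numbers. -/
def OCode.encodeO : OCode → ℕ
  | .zero => 0
  | .succ => 1
  | .left => 2
  | .right => 3
  | .oracle => 4
  | .pair a b => 4 * Nat.pair a.encodeO b.encodeO + 5
  | .comp a b => 4 * Nat.pair a.encodeO b.encodeO + 6
  | .prec a b => 4 * Nat.pair a.encodeO b.encodeO + 7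
  | .rfind' a => 4 * a.encodeO + 8

/-- The total oracle corresponding to a total function. -/
def tot (f : ℕ → ℕ) : ℕ →. ℕ := fun n => Part.some (f n)

/-- The trivial (computable) oracle. -/
def zeroOracle : ℕ →. ℕ := tot fun _ => 0

/-- `maj f h` : `f` majorizes `h`, i.e. `f ≫ h`. -/
def maj (f h : ℕ → ℕ) : Prop := ∀ x, h x ≤ f x

/-- Turing reducibility of total functions. -/
def TuringLE (f g : ℕ → ℕ) : Prop :=
  ∃ c : OCode, ∀ x, OCode.eval (tot g) c x = Part.some (f x)

/-- The Turing jump of a total function (as the characteristic function of the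
relativized halting problem). -/
noncomputable def jumpF (f : ℕ → ℕ) : ℕ → ℕ := fun n =>
  if (∃ c : OCode, ∃ x, n = Nat.pair c.encodeO x ∧ (OCode.eval (tot f) c x).Dom) then 1 else 0

/-- Effective join of two total functions (interleaving). -/
def fjoin (f g : ℕ → ℕ) : ℕ → ℕ := fun n => if n.bodd then g n.div2 else f n.div2

/-- The initial segment (string) of length `n` of `f : ℕ → ℕ`. -/
def initSeg (f : ℕ → ℕ) (n : ℕ) : List ℕ := (List.range n).map f

/-- A tree is a set of strings closed under initial segments. -/
def IsTree (T : Set (List ℕ)) : Prop := ∀ σ ∈ T, ∀ τ : List ℕ, τ <+: σ → τ ∈ T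

/-- `f` is an (infinite) path through `T`. -/
def IsPathThrough (T : Set (List ℕ)) (f : ℕ → ℕ) : Prop := ∀ n, initSeg f n ∈ T

/-- `f` is the unique path through `T`. -/
def UniquePathThrough (T : Set (List ℕ)) (f : ℕ → ℕ) : Prop :=
  IsPathThrough T f ∧ ∀ g, IsPathThrough T g → g = f

/-- The characteristic function (on codes of strings) of a set of strings. -/
noncomputable def treeChi (T : Set (List ℕ)) : ℕ → ℕ := fun n =>
  if (∃ σ ∈ T, Encodable.encode σ = n) then 1 else 0

/-- `T` is a computable tree (its membership relation is computable). -/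
def ComputableTree (T : Set (List ℕ)) : Prop :=
  ∃ c : OCode, ∀ σ : List ℕ,
    OCode.eval zeroOracle c (Encodable.encode σ) = Part.some (if σ ∈ T then 1 else 0)

/-- The extendable nodes of `T`: those lying on an infinite path. -/
def ExtNode (T : Set (List ℕ)) : Set (List ℕ) :=
  {σ | σ ∈ T ∧ ∃ f, IsPathThrough T f ∧ initSeg f σ.length = σ}

/-- `f` is a non-isolated path of `T`: every initial segment of `f` extends to another path. -/
def NonIsolated (T : Set (List ℕ)) (f : ℕ → ℕ) : Prop :=
  ∀ n, ∃ g, IsPathThrough T g ∧ g ≠ f ∧ initSeg g n = initSeg f n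

/-- The finite partial oracle determined by the string `σ`. -/
def strOracle (σ : List ℕ) : ℕ →. ℕ := fun n =>
  if n < σ.length then Part.some (σ.getD n 0) else Part.none

/-- `h` is a modulus of computation for `g`. -/
def Modulus (h g : ℕ → ℕ) : Prop := ∀ f, maj f h → TuringLE g f

/-- `h` is a uniform modulus of computation for `g`. -/
def UniformModulus (h g : ℕ → ℕ) : Prop :=
  ∃ c : OCode, ∀ f, maj f h → ∀ x, OCode.eval (tot f) c x = Part.some (g x)

/-- `h` is a self-modulus. -/
def SelfModulus (h : ℕ → ℕ) : Prop := Modulus h h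

/-- `c` is a truth-table functional: total on every (total) oracle. -/
def ttTotal (c : OCode) : Prop := ∀ f : ℕ → ℕ, ∀ x, (OCode.eval (tot f) c x).Dom
/-- The value of the `e`-th partial recursive function at `n` (0 if divergent). -/
noncomputable def phi0 (e n : ℕ) : ℕ :=
  if h : ((Denumerable.ofNat Nat.Partrec.Code e).eval n).Dom
  then ((Denumerable.ofNat Nat.Partrec.Code e).eval n).get h else 0

/-- Convergence of the `e`-th partial recursive function at `n`. -/
def phi0Dom (e n : ℕ) : Prop := ((Denumerable.ofNat Nat.Partrec.Code e).eval n).Dom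

mutual
/-- Kleene's set `O` of ordinal notations: `1` denotes `0`, `2^a` the successor of `a`,
and `3·5^e` a limit along the effective sequence given by the `e`-th partial recursive
function (required to be total, into `O`, and increasing). -/
inductive KO : ℕ → Prop
  | one : KO 1
  | succ {a : ℕ} : KO a → KO (2 ^ a)
  | lim {e : ℕ} : (∀ n, phi0Dom e n) → (∀ n, KO (phi0 e n)) →
      (∀ n, KOlt (phi0 e n) (phi0 e (n + 1))) → KO (3 * 5 ^ e)
/-- The ordering `<_O` on Kleene's ordinal notations. -/
inductive KOlt : ℕ → ℕ → Prop
  | succ {a : ℕ} : KO a → KOlt a (2 ^ a)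
  | lim {e n : ℕ} : KO (3 * 5 ^ e) → KOlt (phi0 e n) (3 * 5 ^ e)
  | trans {a b c : ℕ} : KOlt a b → KOlt b c → KOlt a c
end

/-- `a ≤_O b`. -/
def KOle (a b : ℕ) : Prop := KOlt a b ∨ a = b

/-- The `n`-th element `a[n]` of the effective limit sequence of a limit notation `a = 3·5^e`. -/
noncomputable def fund (a n : ℕ) : ℕ := phi0 (Nat.log 5 (a / 3)) n

/-- `a` is a limit notation. -/
def IsLimO (a : ℕ) : Prop := KO a ∧ ∃ e, a = 3 * 5 ^ e

/-- `H` is a transfinite jump hierarchy along Kleene's `O` with base `g₀`: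
`H β` plays the role of `g₀^(β)`. -/
def IsJumpHierFrom (g₀ : ℕ → ℕ) (H : ℕ → ℕ → ℕ) : Prop :=
  H 1 = g₀ ∧ (∀ a, KO a → H (2 ^ a) = jumpF (H a)) ∧
  (∀ e, KO (3 * 5 ^ e) → ∀ x,
    H (3 * 5 ^ e) x = H (phi0 e (Nat.unpair x).1) (Nat.unpair x).2)

/-- `H` is the jump hierarchy over the empty set: `H β` plays the role of `0^(β)`. -/
def IsJumpHier (H : ℕ → ℕ → ℕ) : Prop := IsJumpHierFrom (fun _ => 0) H

/-!
Two distinct paths through a uniquely small tree differ at some `y₀`; unique smallness then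
forces `max (ζ x) (g x) ≥ ξ x` for every `x ≥ y₀`. Hence any `h` majorizing `ζ` and `g`
majorizes `ξ` from `y₀` on, and `h` plus the constant `ξ 0 + ⋯ + ξ (y₀ - 1)` majorizes `ξ`
everywhere. That function is computable from `h`, so the uniform modulus `ξ` computes
`0^(b+1)` from it.
-/

namespace OCode

def ofCode : Nat.Partrec.Code → OCode
  | .zero => .zero
  | .succ => .succ
  | .left => .left
  | .right => .right
  | .pair a b => .pair (ofCode a) (ofCode b)
  | .comp a b => .comp (ofCode a) (ofCode b)
  | .prec a b => .prec (ofCode a) (ofCode b)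
  | .rfind' a => .rfind' (ofCode a)

theorem eval_ofCode (g : ℕ →. ℕ) (c : Nat.Partrec.Code) : (ofCode c).eval g = c.eval := by
  induction c <;> funext n <;> simp [ofCode, eval, Nat.Partrec.Code.eval, Nat.unpaired, *]; rfl

theorem exists_eval_eq_of_computable {f : ℕ → ℕ} (hf : Computable f) :
    ∃ c : OCode, ∀ g n, c.eval g n = Part.some (f n) := by
  obtain ⟨c, hc⟩ := Nat.Partrec.Code.exists_code.mp (Partrec.nat_iff.mp hf)
  exact ⟨ofCode c, fun g n => by rw [eval_ofCode, hc]; rfl⟩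

def subst (d : OCode) : OCode → OCode
  | .zero => .zero
  | .succ => .succ
  | .left => .left
  | .right => .right
  | .oracle => d
  | .pair a b => .pair (subst d a) (subst d b)
  | .comp a b => .comp (subst d a) (subst d b)
  | .prec a b => .prec (subst d a) (subst d b)
  | .rfind' a => .rfind' (subst d a)

theorem eval_subst {g : ℕ →. ℕ} {d : OCode} {f : ℕ → ℕ}
    (hd : ∀ n, d.eval g n = Part.some (f n)) (c : OCode) :
    (subst d c).eval g = c.eval (tot f) := by
  induction c <;> funext n <;> simp [eval, subst, tot, *]

end OCode

theorem TuringLE.trans {f g k : ℕ → ℕ} (hfg : TuringLE f g) (hgk : TuringLE g k) :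
    TuringLE f k := by
  obtain ⟨c, hc⟩ := hfg
  obtain ⟨d, hd⟩ := hgk
  exact ⟨OCode.subst d c, fun x => by rw [OCode.eval_subst hd, hc]⟩

theorem UniformModulus.turingLE {ξ A f : ℕ → ℕ} (hξ : UniformModulus ξ A) (hf : maj f ξ) :
    TuringLE A f :=
  let ⟨c, hc⟩ := hξ
  ⟨c, hc f hf⟩

theorem turingLE_add_const_fjoin (h A : ℕ → ℕ) (k : ℕ) :
    TuringLE (fun x => h x + k) (fjoin h A) := by
  obtain ⟨add, hadd⟩ := OCode.exists_eval_eq_of_computable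
    (Primrec.nat_add.comp Primrec.id (Primrec.const k)).to_comp
  obtain ⟨double, hdouble⟩ := OCode.exists_eval_eq_of_computable
    (Primrec.nat_mul.comp (Primrec.const 2) Primrec.id).to_comp
  refine ⟨.comp add (.comp .oracle double), fun x => ?_⟩
  have hfjoin : fjoin h A (2 * x) = h x := by simp [fjoin, Nat.div2_val]
  change ((double.eval _ x).bind fun n => Part.some (fjoin h A n)).bind (add.eval _) = _
  rw [hdouble, Part.bind_some, id, hfjoin]
  exact (Part.bind_some _ _).trans (hadd _ _)

theorem maj_add_sum_of_le {ξ h : ℕ → ℕ} {n : ℕ} (hle : ∀ x ≥ n, ξ x ≤ h x) :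
    maj (fun x => h x + ∑ i ∈ Finset.range n, ξ i) ξ := by
  intro x
  rcases le_or_gt n x with hx | hx
  · exact (hle x hx).trans (Nat.le_add_right _ _)
  · exact (Finset.single_le_sum (fun i _ => Nat.zero_le (ξ i))
      (Finset.mem_range.mpr hx)).trans (Nat.le_add_left _ _)

/-- let `ξ` be non-decreasing and a uniform modulus for `0^(b+1)`
(e.g. the settling-time function for `0^(b+1)`).  If `T` is a tree computable from `0^(b)`
that is uniquely `(b+1)`-small and `ζ, g` are distinct paths through `T`, then wherever
`ζ↾(x+1) ≠ g↾(x+1)` we have `max (ζ x) (g x) ≥ ξ x`; consequently any non-decreasing `h`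
majorizing both `ζ` and `g` computes `0^(b+1)` from `0^(b)`. -/
theorem uniquely_small_pair_computes_jump
    (b : ℕ) (hb : KO b) (H : ℕ → ℕ → ℕ) (hH : IsJumpHier H)
    (ξ : ℕ → ℕ) (hmono : Monotone ξ)
    (hxi : ∃ c : OCode, ∀ f, maj f ξ → ∀ x,
      OCode.eval (tot f) c x = Part.some (H (2 ^ b) x))
    (T : Set (List ℕ)) (hT : IsTree T) (hTc : TuringLE (treeChi T) (H b))
    (hsmall : ∀ f g : ℕ → ℕ, IsPathThrough T f → IsPathThrough T g →
      ∀ x, f x ≤ ξ x → g x ≤ ξ x → ∀ y ≤ x, f y = g y)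
    (ζ g : ℕ → ℕ) (hζ : IsPathThrough T ζ) (hg : IsPathThrough T g) (hne : ζ ≠ g) :
    (∀ x, (∃ y ≤ x, ζ y ≠ g y) → ξ x ≤ max (ζ x) (g x)) ∧
    (∀ h : ℕ → ℕ, Monotone h → maj h ζ → maj h g →
      TuringLE (H (2 ^ b)) (fjoin h (H b))) := by
  have separated : ∀ x, (∃ y ≤ x, ζ y ≠ g y) → ξ x ≤ max (ζ x) (g x) := by
    rintro x ⟨y, hyx, hy⟩
    by_contra! hlt
    exact hy (hsmall ζ g hζ hg x ((le_max_left _ _).trans hlt.le)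
      ((le_max_right _ _).trans hlt.le) y hyx)
  refine ⟨separated, fun h _ hζh hgh => ?_⟩
  obtain ⟨y₀, hy₀⟩ := Function.ne_iff.mp hne
  have hmaj : maj (fun x => h x + ∑ i ∈ Finset.range y₀, ξ i) ξ :=
    maj_add_sum_of_le fun x hx => (separated x ⟨y₀, hx, hy₀⟩).trans (max_le (hζh x) (hgh x))
  exact (UniformModulus.turingLE hxi hmaj).trans (turingLE_add_const_fjoin h (H b) _)
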